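/- arXiv:1804.01113 — 7 statements merged into one kernel-verified Lean document; each statement's English description precedes it below -/
import Mathlib

section
/- Let Q be a quandle, A an abelian quandle, and φ : Q → Conj(Aut(A)) a quandle action of Q on A. If f, g ∈ Der_φ(Q, A) are derivations with respect to φ, then the pointwise product f * g : Q → A defined by (f*g)(q) = f(q) * g(q) is again a derivation with respect to φ. -/
/-- A quandle structure on a type `X`: a binary operation satisfying
(Q1) idempotence, (Q2) unique right division, (Q3) right self-distributivity. -/
structure QuandleStr (X : Type*) where
  op : X → X → X
  idem : ∀ x : X, op x x = x
  unique_div : ∀ x y : X, ∃! z : X, op z y = x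
  distrib : ∀ x y z : X, op (op x y) z = op (op x z) (op y z)

/-- A quandle homomorphism. -/
def IsQuandleHom {Q X : Type*} (sQ : QuandleStr Q) (sX : QuandleStr X) (f : Q → X) : Prop :=
  ∀ a b : Q, f (sQ.op a b) = sX.op (f a) (f b)

/-- A quandle action of `Q` on `X`: a quandle homomorphism
`φ : Q → Conj(Aut X)`, where automorphisms are bijective quandle
homomorphisms and `Conj` has operation `a * b = b⁻¹ ∘ a ∘ b`. -/
def IsQuandleAction {Q X : Type*} (sQ : QuandleStr Q) (sX : QuandleStr X)
    (φ : Q → X ≃ X) : Prop :=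
  (∀ q : Q, IsQuandleHom sX sX (φ q)) ∧
  (∀ q₁ q₂ : Q, ∀ x : X, φ (sQ.op q₁ q₂) x = (φ q₂).symm (φ q₁ (φ q₂ x)))

/-- A derivation with respect to a quandle action `φ` of `Q` on `X`:
`f (q₁ * q₂) = f q₁ * (f q₂)^{φ q₁}`. -/
def IsDerivation {Q X : Type*} (sQ : QuandleStr Q) (sX : QuandleStr X)
    (φ : Q → X ≃ X) (f : Q → X) : Prop :=
  ∀ q₁ q₂ : Q, f (sQ.op q₁ q₂) = sX.op (f q₁) (φ q₁ (f q₂))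

/-- An abelian (medial) quandle. -/
def IsAbelian {X : Type*} (sX : QuandleStr X) : Prop :=
  ∀ x y z w : X, sX.op (sX.op x y) (sX.op z w) = sX.op (sX.op x z) (sX.op y w)

theorem stmt3 {Q A : Type*} (sQ : QuandleStr Q) (sA : QuandleStr A)
    (hA : IsAbelian sA) (φ : Q → A ≃ A) (hφ : IsQuandleAction sQ sA φ)
    (f g : Q → A) (hf : IsDerivation sQ sA φ f) (hg : IsDerivation sQ sA φ g) :
    IsDerivation sQ sA φ (fun q => sA.op (f q) (g q)) := by
  intro q₁ q₂
  simp only [hf q₁ q₂, hg q₁ q₂, hφ.1 q₁ (f q₂) (g q₂)]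
  exact hA _ _ _ _
end

section
/- Let Q be a quandle, A an abelian quandle, and φ : Q → Conj(Aut(A)) a quandle action of Q on A. If f, g ∈ Der_φ(Q, A), then the map h : Q → A defined by letting h(q) be the unique element of A with h(q) * f(q) = g(q) is again a derivation with respect to φ; thus h is the unique element of Der_φ(Q, A) with h * f = g under the pointwise operation (f*g)(q) = f(q)*g(q). -/
theorem stmt4 {Q A : Type*} (sQ : QuandleStr Q) (sA : QuandleStr A)
    (hA : IsAbelian sA) (φ : Q → A ≃ A) (hφ : IsQuandleAction sQ sA φ)
    (f g : Q → A) (hf : IsDerivation sQ sA φ f) (hg : IsDerivation sQ sA φ g)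
    (h : Q → A) (hh : ∀ q : Q, sA.op (h q) (f q) = g q) :
    IsDerivation sQ sA φ h ∧
    ∀ h' : Q → A, IsDerivation sQ sA φ h' →
      (fun q => sA.op (h' q) (f q)) = g → h' = h := by
  have cancel : ∀ x y z z' : A, sA.op z y = x → sA.op z' y = x → z = z' := by
    intro x y z z' hz hz'
    obtain ⟨w, -, huniq⟩ := sA.unique_div x y
    rw [huniq z hz, huniq z' hz']
  constructor
  · intro q₁ q₂
    apply cancel (g (sQ.op q₁ q₂)) (f (sQ.op q₁ q₂))
    · exact hh _
    · rw [hf, hg]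
      calc sA.op (sA.op (h q₁) (φ q₁ (h q₂))) (sA.op (f q₁) (φ q₁ (f q₂)))
          = sA.op (sA.op (h q₁) (f q₁)) (sA.op (φ q₁ (h q₂)) (φ q₁ (f q₂))) := hA _ _ _ _
        _ = sA.op (g q₁) (φ q₁ (sA.op (h q₂) (f q₂))) := by
              rw [hh, hφ.1 q₁ (h q₂) (f q₂)]
        _ = sA.op (g q₁) (φ q₁ (g q₂)) := by rw [hh]
  · intro h' _ hh'
    funext q
    exact cancel (g q) (f q) (h' q) (h q) (congrFun hh' q) (hh q)
end

section
/- Let Q be a quandle, A an abelian quandle, and φ : Q → Conj(Aut(A)) a quandle action of Q on A. If the set Der_φ(Q, A) of derivations with respect to φ is non-empty, then it is an abelian quandle under the pointwise operation (f*g)(q) = f(q)*g(q): it satisfies idempotence, for all f,g there is a unique h ∈ Der_φ(Q, A) with h*f = g, self-distributivity, and the medial law (f*g)*(h*k) = (f*h)*(g*k). -/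
theorem stmt5 {Q A : Type*} (sQ : QuandleStr Q) (sA : QuandleStr A)
    (hA : IsAbelian sA) (φ : Q → A ≃ A) (hφ : IsQuandleAction sQ sA φ)
    (hne : {f : Q → A | IsDerivation sQ sA φ f}.Nonempty) :
    -- closure under the pointwise operation
    (∀ f g : Q → A, IsDerivation sQ sA φ f → IsDerivation sQ sA φ g →
      IsDerivation sQ sA φ (fun q => sA.op (f q) (g q))) ∧
    -- (Q1) idempotence
    (∀ f : Q → A, IsDerivation sQ sA φ f →
      (fun q => sA.op (f q) (f q)) = f) ∧
    -- (Q2) unique right division within the derivation set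
    (∀ f g : Q → A, IsDerivation sQ sA φ f → IsDerivation sQ sA φ g →
      ∃! h : Q → A, IsDerivation sQ sA φ h ∧ (fun q => sA.op (h q) (f q)) = g) ∧
    -- (Q3) right self-distributivity
    (∀ f g h : Q → A, IsDerivation sQ sA φ f → IsDerivation sQ sA φ g →
      IsDerivation sQ sA φ h →
      (fun q => sA.op (sA.op (f q) (g q)) (h q)) =
        (fun q => sA.op (sA.op (f q) (h q)) (sA.op (g q) (h q)))) ∧
    -- the medial (abelian) law
    (∀ f g h k : Q → A, IsDerivation sQ sA φ f → IsDerivation sQ sA φ g →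
      IsDerivation sQ sA φ h → IsDerivation sQ sA φ k →
      (fun q => sA.op (sA.op (f q) (g q)) (sA.op (h q) (k q))) =
        (fun q => sA.op (sA.op (f q) (h q)) (sA.op (g q) (k q)))) := by
  refine ⟨?_, ?_, ?_, ?_, ?_⟩
  · intro f g hf hg q₁ q₂
    simp only [hf q₁ q₂, hg q₁ q₂, (hφ.1 q₁) (f q₂) (g q₂)]
    exact hA _ _ _ _
  · intro f hf
    funext q; exact sA.idem _
  · intro f g hf hg
    refine ⟨fun q => (sA.unique_div (g q) (f q)).choose, ⟨?_, ?_⟩, ?_⟩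
    · intro q₁ q₂
      have key : ∀ q, sA.op ((sA.unique_div (g q) (f q)).choose) (f q) = g q :=
        fun q => (sA.unique_div (g q) (f q)).choose_spec.1
      apply ((sA.unique_div (g (sQ.op q₁ q₂)) (f (sQ.op q₁ q₂))).choose_spec.2 _ ?_).symm
      calc sA.op (sA.op ((sA.unique_div (g q₁) (f q₁)).choose)
              (φ q₁ ((sA.unique_div (g q₂) (f q₂)).choose))) (f (sQ.op q₁ q₂))
          = sA.op (sA.op ((sA.unique_div (g q₁) (f q₁)).choose)
              (φ q₁ ((sA.unique_div (g q₂) (f q₂)).choose)))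
              (sA.op (f q₁) (φ q₁ (f q₂))) := by rw [hf q₁ q₂]
        _ = sA.op (sA.op ((sA.unique_div (g q₁) (f q₁)).choose) (f q₁))
              (sA.op (φ q₁ ((sA.unique_div (g q₂) (f q₂)).choose)) (φ q₁ (f q₂))) :=
            hA _ _ _ _
        _ = sA.op (g q₁) (φ q₁ (sA.op ((sA.unique_div (g q₂) (f q₂)).choose) (f q₂))) := by
            rw [key q₁, (hφ.1 q₁) _ (f q₂)]
        _ = sA.op (g q₁) (φ q₁ (g q₂)) := by rw [key q₂]
        _ = g (sQ.op q₁ q₂) := (hg q₁ q₂).symm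
    · funext q; exact (sA.unique_div (g q) (f q)).choose_spec.1
    · intro h ⟨hh, hhf⟩
      funext q
      exact (sA.unique_div (g q) (f q)).choose_spec.2 _ (congrFun hhf q)
  · intro f g h hf hg hh
    funext q; exact sA.distrib _ _ _
  · intro f g h k hf hg hh hk
    funext q; exact hA _ _ _ _
end

section
/- Let Q be a quandle, A an additive abelian group, T(A) the Takasaki quandle of A (operation a*b = 2b - a), and φ : Q → Conj(Aut(T(A))) a quandle action of Q on T(A). Then for all f, g ∈ Der_φ(Q, T(A)), the pointwise quandle operation satisfies f * g = 2g - f as functions Q → A, and the function 2g - f (defined by q ↦ 2g(q) - f(q)) is again a derivation with respect to φ; in other words, the quandle structure of Der_φ(Q, T(A)) coincides with the Takasaki operation on functions. -/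
theorem stmt7 {Q A : Type*} [AddCommGroup A] (sQ : QuandleStr Q)
    (sA : QuandleStr A) (hT : ∀ a b : A, sA.op a b = 2 • b - a)
    (φ : Q → A ≃ A) (hφ : IsQuandleAction sQ sA φ)
    (f g : Q → A) (hf : IsDerivation sQ sA φ f) (hg : IsDerivation sQ sA φ g) :
    (fun q => sA.op (f q) (g q)) = (fun q => 2 • g q - f q) ∧
    IsDerivation sQ sA φ (fun q => 2 • g q - f q) := by
  refine ⟨funext fun q => hT _ _, fun q₁ q₂ => ?_⟩
  have key : φ q₁ (2 • g q₂ - f q₂) = 2 • φ q₁ (g q₂) - φ q₁ (f q₂) := by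
    rw [← hT, hφ.1 q₁ (f q₂) (g q₂), hT]
  simp only [hT, hf q₁ q₂, hg q₁ q₂, key]
  abel
end

section
/- Let Q₁, Q₂ be quandles, A₁, A₂ abelian quandles, φ₁ : Q₁ → Conj(Aut(A₁)) and φ₂ : Q₂ → Conj(Aut(A₂)) quandle actions, and let σ : Q₂ → Q₁ and τ : A₁ → A₂ be quandle homomorphisms that are action compatible, i.e. τ(a^{φ₁(σ(q))}) = τ(a)^{φ₂(q)} for all q ∈ Q₂ and a ∈ A₁. Then the map Φ defined by Φ(f) = τ ∘ f ∘ σ sends Der_{φ₁}(Q₁, A₁) into Der_{φ₂}(Q₂, A₂) and is a quandle homomorphism with respect to the pointwise operations: Φ(f*g) = Φ(f)*Φ(g) for all f, g ∈ Der_{φ₁}(Q₁, A₁). -/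
theorem stmt11 {Q₁ Q₂ A₁ A₂ : Type*}
    (sQ₁ : QuandleStr Q₁) (sQ₂ : QuandleStr Q₂)
    (sA₁ : QuandleStr A₁) (sA₂ : QuandleStr A₂)
    (hA₁ : IsAbelian sA₁) (hA₂ : IsAbelian sA₂)
    (φ₁ : Q₁ → A₁ ≃ A₁) (hφ₁ : IsQuandleAction sQ₁ sA₁ φ₁)
    (φ₂ : Q₂ → A₂ ≃ A₂) (hφ₂ : IsQuandleAction sQ₂ sA₂ φ₂)
    (σ : Q₂ → Q₁) (hσ : IsQuandleHom sQ₂ sQ₁ σ)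
    (τ : A₁ → A₂) (hτ : IsQuandleHom sA₁ sA₂ τ)
    (hcomp : ∀ (q : Q₂) (a : A₁), τ (φ₁ (σ q) a) = φ₂ q (τ a)) :
    (∀ f : Q₁ → A₁, IsDerivation sQ₁ sA₁ φ₁ f →
      IsDerivation sQ₂ sA₂ φ₂ (τ ∘ f ∘ σ)) ∧
    (∀ f g : Q₁ → A₁, IsDerivation sQ₁ sA₁ φ₁ f → IsDerivation sQ₁ sA₁ φ₁ g →
      τ ∘ (fun q => sA₁.op (f q) (g q)) ∘ σ =
        fun q => sA₂.op ((τ ∘ f ∘ σ) q) ((τ ∘ g ∘ σ) q)) := by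
  constructor
  · intro f hf q₁ q₂
    simp only [Function.comp_apply]
    rw [hσ, hf, hτ, hcomp]
  · intro f g hf hg
    funext q
    exact hτ _ _
end

section
/- Let Q^α and A^β be virtual quandles with A abelian, and let φ be a virtual quandle action of Q^α on A^β. Then the set Der_φ(Q^α, A^β) of virtual derivations is an abelian quandle under the pointwise operation (f*g)(q) = f(q)*g(q), and the map Γ : Der_φ(Q^α, A^β) → Der_φ(Q^α, A^β) defined by Γ(f) = β⁻¹ ∘ f ∘ α⁻¹ is well defined (Γ(f) is again a virtual derivation) and is a quandle automorphism of Der_φ(Q^α, A^β), with inverse f ↦ β ∘ f ∘ α. -/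
/-- A virtual quandle action of `(Q, α)` on `(X, β)`: a quandle action whose
underlying map `φ : Q → Conj(Aut X)` intertwines `α` with conjugation by `β`. -/
def IsVirtualAction {Q X : Type*} (sQ : QuandleStr Q) (sX : QuandleStr X)
    (α : Q ≃ Q) (β : X ≃ X) (φ : Q → X ≃ X) : Prop :=
  IsQuandleAction sQ sX φ ∧ (∀ q : Q, ∀ x : X, φ (α q) x = β.symm (φ q (β x)))

/-- A virtual derivation: a derivation which additionally satisfies `β ∘ f = f ∘ α`. -/
def IsVirtualDerivation {Q X : Type*} (sQ : QuandleStr Q) (sX : QuandleStr X)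
    (α : Q ≃ Q) (β : X ≃ X) (φ : Q → X ≃ X) (f : Q → X) : Prop :=
  IsDerivation sQ sX φ f ∧ (∀ q : Q, β (f q) = f (α q))

theorem stmt16 {Q A : Type*} (sQ : QuandleStr Q) (sA : QuandleStr A)
    (hA : IsAbelian sA)
    (α : Q ≃ Q) (hα : IsQuandleHom sQ sQ α)
    (β : A ≃ A) (hβ : IsQuandleHom sA sA β)
    (φ : Q → A ≃ A) (hφ : IsVirtualAction sQ sA α β φ) :
    -- closure under the pointwise operation
    (∀ f g : Q → A, IsVirtualDerivation sQ sA α β φ f →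
      IsVirtualDerivation sQ sA α β φ g →
      IsVirtualDerivation sQ sA α β φ (fun q => sA.op (f q) (g q))) ∧
    -- (Q1) idempotence
    (∀ f : Q → A, IsVirtualDerivation sQ sA α β φ f →
      (fun q => sA.op (f q) (f q)) = f) ∧
    -- (Q2) unique right division within the virtual derivation set
    (∀ f g : Q → A, IsVirtualDerivation sQ sA α β φ f →
      IsVirtualDerivation sQ sA α β φ g →
      ∃! h : Q → A, IsVirtualDerivation sQ sA α β φ h ∧
        (fun q => sA.op (h q) (f q)) = g) ∧
    -- (Q3) right self-distributivity
    (∀ f g h : Q → A, IsVirtualDerivation sQ sA α β φ f →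
      IsVirtualDerivation sQ sA α β φ g → IsVirtualDerivation sQ sA α β φ h →
      (fun q => sA.op (sA.op (f q) (g q)) (h q)) =
        (fun q => sA.op (sA.op (f q) (h q)) (sA.op (g q) (h q)))) ∧
    -- the medial (abelian) law
    (∀ f g h k : Q → A, IsVirtualDerivation sQ sA α β φ f →
      IsVirtualDerivation sQ sA α β φ g → IsVirtualDerivation sQ sA α β φ h →
      IsVirtualDerivation sQ sA α β φ k →
      (fun q => sA.op (sA.op (f q) (g q)) (sA.op (h q) (k q))) =
        (fun q => sA.op (sA.op (f q) (h q)) (sA.op (g q) (k q)))) ∧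
    -- Γ(f) = β⁻¹ ∘ f ∘ α⁻¹ is well defined on virtual derivations
    (∀ f : Q → A, IsVirtualDerivation sQ sA α β φ f →
      IsVirtualDerivation sQ sA α β φ (⇑β.symm ∘ f ∘ ⇑α.symm)) ∧
    -- Γ is a quandle homomorphism for the pointwise operation
    (∀ f g : Q → A, IsVirtualDerivation sQ sA α β φ f →
      IsVirtualDerivation sQ sA α β φ g →
      ⇑β.symm ∘ (fun q => sA.op (f q) (g q)) ∘ ⇑α.symm =
        fun q => sA.op ((⇑β.symm ∘ f ∘ ⇑α.symm) q) ((⇑β.symm ∘ g ∘ ⇑α.symm) q)) ∧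
    -- f ↦ β ∘ f ∘ α is well defined on virtual derivations and inverts Γ
    (∀ f : Q → A, IsVirtualDerivation sQ sA α β φ f →
      IsVirtualDerivation sQ sA α β φ (⇑β ∘ f ∘ ⇑α)) ∧
    (∀ f : Q → A, IsVirtualDerivation sQ sA α β φ f →
      ⇑β ∘ (⇑β.symm ∘ f ∘ ⇑α.symm) ∘ ⇑α = f) ∧
    (∀ f : Q → A, IsVirtualDerivation sQ sA α β φ f →
      ⇑β.symm ∘ (⇑β ∘ f ∘ ⇑α) ∘ ⇑α.symm = f) := by
  obtain ⟨⟨hhom, _hconj⟩, hint⟩ := hφ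
  have hβs : ∀ x y : A, β.symm (sA.op x y) = sA.op (β.symm x) (β.symm y) := by
    intro x y
    apply β.injective
    rw [Equiv.apply_symm_apply, hβ, Equiv.apply_symm_apply, Equiv.apply_symm_apply]
  have hαs : ∀ a b : Q, α.symm (sQ.op a b) = sQ.op (α.symm a) (α.symm b) := by
    intro a b
    apply α.injective
    rw [Equiv.apply_symm_apply, hα, Equiv.apply_symm_apply, Equiv.apply_symm_apply]
  refine ⟨?_, ?_, ?_, ?_, ?_, ?_, ?_, ?_, ?_, ?_⟩
  · -- closure
    rintro f g ⟨hf, hf'⟩ ⟨hg, hg'⟩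
    refine ⟨fun q₁ q₂ => ?_, fun q => ?_⟩
    · show sA.op (f (sQ.op q₁ q₂)) (g (sQ.op q₁ q₂)) = _
      rw [hf, hg, hA, hhom q₁]
    · show β (sA.op (f q) (g q)) = _
      rw [hβ, hf', hg']
  · intro f _; funext q; exact sA.idem (f q)
  · -- unique division
    rintro f g ⟨hf, hf'⟩ ⟨hg, hg'⟩
    choose h hh hu using fun q => sA.unique_div (g q) (f q)
    have hu' : ∀ q z, sA.op z (f q) = g q → z = h q := fun q z hz => hu q z hz
    refine ⟨h, ⟨⟨fun q₁ q₂ => ?_, fun q => ?_⟩, funext hh⟩, ?_⟩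
    · symm; apply hu'
      rw [hf, hA, hh, ← hhom q₁, hh, hg]
    · apply hu'
      rw [← hf', ← hβ, hh, hg']
    · rintro h' ⟨⟨_, _⟩, hh'⟩
      funext q
      exact hu' q (h' q) (congrFun hh' q)
  · intro f g h _ _ _; funext q; exact sA.distrib _ _ _
  · intro f g h k _ _ _ _; funext q; exact hA _ _ _ _
  · -- Γ well defined
    rintro f ⟨hf, hf'⟩
    refine ⟨fun q₁ q₂ => ?_, fun q => ?_⟩
    · have key : φ q₁ (β.symm (f (α.symm q₂))) = β.symm (φ (α.symm q₁) (f (α.symm q₂))) := by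
        have h0 := hint (α.symm q₁) (β.symm (f (α.symm q₂)))
        rw [Equiv.apply_symm_apply, Equiv.apply_symm_apply] at h0
        rw [h0]
      show β.symm (f (α.symm (sQ.op q₁ q₂))) =
        sA.op (β.symm (f (α.symm q₁))) (φ q₁ (β.symm (f (α.symm q₂))))
      rw [hαs, hf (α.symm q₁) (α.symm q₂), hβs, key]
    · show β (β.symm (f (α.symm q))) = β.symm (f (α.symm (α q)))
      rw [Equiv.apply_symm_apply, Equiv.symm_apply_apply]
      apply β.injective
      rw [Equiv.apply_symm_apply, hf', Equiv.apply_symm_apply]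
  · -- Γ is a hom
    intro f g _ _; funext q
    show β.symm (sA.op (f (α.symm q)) (g (α.symm q))) = _
    rw [hβs]; rfl
  · -- inverse well defined
    rintro f ⟨hf, hf'⟩
    refine ⟨fun q₁ q₂ => ?_, fun q => ?_⟩
    · have key : β (φ (α q₁) (f (α q₂))) = φ q₁ (β (f (α q₂))) := by
        rw [hint q₁ (f (α q₂)), Equiv.apply_symm_apply]
      show β (f (α (sQ.op q₁ q₂))) = sA.op (β (f (α q₁))) (φ q₁ (β (f (α q₂))))
      rw [hα, hf (α q₁) (α q₂), hβ, key]
    · show β (β (f (α q))) = β (f (α (α q)))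
      rw [hf' (α q)]
  · intro f _; funext q
    simp [Function.comp_apply]
  · intro f _; funext q
    simp [Function.comp_apply]
end

section
/- Let Q₁^{α₁}, Q₂^{α₂} be virtual quandles, A₁^{β₁}, A₂^{β₂} virtual quandles with A₁, A₂ abelian, and let φ₁, φ₂ be virtual quandle actions of Q₁^{α₁} on A₁^{β₁} and of Q₂^{α₂} on A₂^{β₂}, respectively. Let σ : Q₂^{α₂} → Q₁^{α₁} and τ : A₁^{β₁} → A₂^{β₂} be virtual quandle homomorphisms that are action compatible, i.e. τ(a^{φ₁(σ(q))}) = τ(a)^{φ₂(q)} for all q ∈ Q₂ and a ∈ A₁. Then the map Φ(f) = τ ∘ f ∘ σ sends Der_{φ₁}(Q₁^{α₁}, A₁^{β₁}) into Der_{φ₂}(Q₂^{α₂}, A₂^{β₂}) and is a quandle homomorphism with respect to the pointwise operations; moreover, if σ and τ are both isomorphisms of virtual quandles, then Φ is a bijection with inverse f ↦ τ⁻¹ ∘ f ∘ σ⁻¹. -/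
theorem stmt18 {Q₁ Q₂ A₁ A₂ : Type*}
    (sQ₁ : QuandleStr Q₁) (sQ₂ : QuandleStr Q₂)
    (sA₁ : QuandleStr A₁) (sA₂ : QuandleStr A₂)
    (hA₁ : IsAbelian sA₁) (hA₂ : IsAbelian sA₂)
    (α₁ : Q₁ ≃ Q₁) (hα₁ : IsQuandleHom sQ₁ sQ₁ α₁)
    (α₂ : Q₂ ≃ Q₂) (hα₂ : IsQuandleHom sQ₂ sQ₂ α₂)
    (β₁ : A₁ ≃ A₁) (hβ₁ : IsQuandleHom sA₁ sA₁ β₁)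
    (β₂ : A₂ ≃ A₂) (hβ₂ : IsQuandleHom sA₂ sA₂ β₂)
    (φ₁ : Q₁ → A₁ ≃ A₁) (hφ₁ : IsVirtualAction sQ₁ sA₁ α₁ β₁ φ₁)
    (φ₂ : Q₂ → A₂ ≃ A₂) (hφ₂ : IsVirtualAction sQ₂ sA₂ α₂ β₂ φ₂)
    (σ : Q₂ → Q₁) (hσ : IsQuandleHom sQ₂ sQ₁ σ)
    (hσv : ∀ q : Q₂, α₁ (σ q) = σ (α₂ q))
    (τ : A₁ → A₂) (hτ : IsQuandleHom sA₁ sA₂ τ)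
    (hτv : ∀ a : A₁, β₂ (τ a) = τ (β₁ a))
    (hcomp : ∀ (q : Q₂) (a : A₁), τ (φ₁ (σ q) a) = φ₂ q (τ a)) :
    -- Φ maps virtual derivations to virtual derivations
    (∀ f : Q₁ → A₁, IsVirtualDerivation sQ₁ sA₁ α₁ β₁ φ₁ f →
      IsVirtualDerivation sQ₂ sA₂ α₂ β₂ φ₂ (τ ∘ f ∘ σ)) ∧
    -- Φ is a quandle homomorphism for the pointwise operations
    (∀ f g : Q₁ → A₁, IsVirtualDerivation sQ₁ sA₁ α₁ β₁ φ₁ f →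
      IsVirtualDerivation sQ₁ sA₁ α₁ β₁ φ₁ g →
      τ ∘ (fun q => sA₁.op (f q) (g q)) ∘ σ =
        fun q => sA₂.op ((τ ∘ f ∘ σ) q) ((τ ∘ g ∘ σ) q)) ∧
    -- if σ and τ are isomorphisms of virtual quandles, Φ is a bijection with
    -- inverse f ↦ τ⁻¹ ∘ f ∘ σ⁻¹
    (∀ (σ' : Q₁ → Q₂) (τ' : A₂ → A₁),
      Function.LeftInverse σ' σ → Function.RightInverse σ' σ →
      Function.LeftInverse τ' τ → Function.RightInverse τ' τ →
      (∀ f : Q₂ → A₂, IsVirtualDerivation sQ₂ sA₂ α₂ β₂ φ₂ f →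
        IsVirtualDerivation sQ₁ sA₁ α₁ β₁ φ₁ (τ' ∘ f ∘ σ')) ∧
      (∀ f : Q₁ → A₁, IsVirtualDerivation sQ₁ sA₁ α₁ β₁ φ₁ f →
        τ' ∘ (τ ∘ f ∘ σ) ∘ σ' = f) ∧
      (∀ f : Q₂ → A₂, IsVirtualDerivation sQ₂ sA₂ α₂ β₂ φ₂ f →
        τ ∘ (τ' ∘ f ∘ σ') ∘ σ = f)) := by
  refine ⟨?_, ?_, ?_⟩
  · rintro f ⟨hd, hv⟩
    refine ⟨fun q₁ q₂ => ?_, fun q => ?_⟩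
    · show τ (f (σ (sQ₂.op q₁ q₂))) = _
      rw [hσ, hd, hτ, hcomp]
      rfl
    · show β₂ (τ (f (σ q))) = τ (f (σ (α₂ q)))
      rw [hτv, hv, hσv]
  · intro f g _ _
    funext q
    exact hτ _ _
  · intro σ' τ' hσl hσr hτl hτr
    have hστ : ∀ q : Q₁, σ (σ' q) = q := hσr
    have hσσ : ∀ q : Q₂, σ' (σ q) = q := hσl
    have hττ : ∀ a : A₁, τ' (τ a) = a := hτl
    have hτt : ∀ a : A₂, τ (τ' a) = a := hτr
    have hσ' : ∀ a b : Q₁, σ' (sQ₁.op a b) = sQ₂.op (σ' a) (σ' b) := by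
      intro a b
      have : sQ₁.op a b = σ (sQ₂.op (σ' a) (σ' b)) := by rw [hσ, hστ, hστ]
      rw [this, hσσ]
    have hτ' : ∀ a b : A₂, τ' (sA₂.op a b) = sA₁.op (τ' a) (τ' b) := by
      intro a b
      have : sA₂.op a b = τ (sA₁.op (τ' a) (τ' b)) := by rw [hτ, hτt, hτt]
      rw [this, hττ]
    have hσv' : ∀ q : Q₁, α₂ (σ' q) = σ' (α₁ q) := by
      intro q
      have : σ (α₂ (σ' q)) = σ (σ' (α₁ q)) := by
        rw [hστ, ← hσv, hστ]
      have := congrArg σ' this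
      rwa [hσσ, hσσ] at this
    have hτv' : ∀ a : A₂, β₁ (τ' a) = τ' (β₂ a) := by
      intro a
      have : τ (β₁ (τ' a)) = τ (τ' (β₂ a)) := by
        rw [hτt, ← hτv, hτt]
      have := congrArg τ' this
      rwa [hττ, hττ] at this
    have hcomp' : ∀ (q : Q₁) (a : A₂), τ' (φ₂ (σ' q) a) = φ₁ q (τ' a) := by
      intro q a
      have h1 : τ (φ₁ q (τ' a)) = φ₂ (σ' q) a := by
        have := hcomp (σ' q) (τ' a)
        rwa [hστ, hτt] at this
      rw [← h1, hττ]
    refine ⟨?_, ?_, ?_⟩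
    · rintro f ⟨hd, hv⟩
      refine ⟨fun q₁ q₂ => ?_, fun q => ?_⟩
      · show τ' (f (σ' (sQ₁.op q₁ q₂))) = _
        rw [hσ', hd, hτ', hcomp']
        rfl
      · show β₁ (τ' (f (σ' q))) = τ' (f (σ' (α₁ q)))
        rw [hτv', hv, hσv']
    · intro f _
      funext q
      show τ' (τ (f (σ (σ' q)))) = f q
      rw [hστ, hττ]
    · intro f _
      funext q
      show τ (τ' (f (σ' (σ q)))) = f q
      rw [hσσ, hτt]
end
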